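/- (Correctness of REMOVE-BLANKS.) Let Γ = {a₀,…,a_{n−1}} be a tape alphabet encoded by ⟨⟨aᵢ⟩⟩ = i, let Σ = {a₀,…,a_{m−1}} with m < n be the input alphabet (so every symbol of Γ∖Σ, including the blank ␣ ∈ Γ∖Σ, has code ≥ m), and let REMOVE-BLANKS be the term: NORMAL rgt {ROF rgt {PUSH[0] g1}…{PUSH[n−1] g1}}; NORMAL g1 {FOR g1 {POP[0] rgt}…{POP[n−1] rgt}; ROF g1 {PUSH[0] rgt}…{PUSH[m−1] rgt}{SKIP}}, where rgt and g1 are distinct registers. Then for every v ∈ Σ*, every k ≥ 0, and every store φ with φ(rgt) = ⟨⟨v⟩⟩ ++ bs, where bs consists of k copies of ⟨⟨␣⟩⟩, and φ(g1) = []: ⟨REMOVE-BLANKS, (φ, 0)⟩ ⇓ (φ', 0) for some store φ' with φ'(rgt) = ⟨⟨v⟩⟩ and φ'(x) = φ(x) for every register x other than rgt and g1. -/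

import Mathlib

set_option linter.unusedVariables false

namespace ForNo

/-- Registers. -/
abbrev Reg := ℕ
/-- Stacks of natural numbers; the head is the top. -/
abbrev Stack := List ℕ
/-- Stores map registers to stacks. -/
abbrev Store := Reg → Stack
/-- A state is a store together with an error counter. -/
abbrev FState := Store × ℕ

/-- The store mapping every register to the empty stack. -/
def emptyStore : Store := fun _ => []

/-- Store update. -/
def upd (φ : Store) (x : Reg) (s : Stack) : Store := fun y => if y = x then s else φ y

/-- Counter-guarded push operation. -/
def pushOp (n : ℕ) : Stack × ℕ → Stack × ℕ
  | (s, 0) => (n :: s, 0)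
  | (s, c + 1) => if s.head? = some n then (s, c + 1) else (s, c)

/-- Counter-guarded pop operation. -/
def popOp (n : ℕ) : Stack × ℕ → Stack × ℕ
  | (s, c) =>
      if s.head? = some n then
        match c with
        | 0 => (s.tail, 0)
        | c + 1 => (s, c + 1)
      else (s, c + 1)

mutual
  /-- Terms of the (raw) language. -/
  inductive Term : Type where
    | skip : Term
    | push : ℕ → Reg → Term
    | pop : ℕ → Reg → Term
    | seq : Term → Term → Term
    | ifeq : Reg → ℕ → Term → Term
    | normal : List Reg → Term → Term
    | fort : Reg → Bodies → Term
    | roft : Reg → Bodies → Term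
  /-- Nonempty lists of iteration bodies. -/
  inductive Bodies : Type where
    | single : Term → Bodies
    | cons : Term → Bodies → Bodies
end

/-- `ps.get i` is `P_min(i,m)` where `ps = P₀ … P_m`. -/
def Bodies.get : Bodies → ℕ → Term
  | .single t, _ => t
  | .cons t _, 0 => t
  | .cons _ ps, i + 1 => ps.get i

mutual
  /-- Big-step operational semantics `⟨T, ω⟩ ⇓ ω'`. -/
  inductive Eval : Term → FState → FState → Prop where
    | skip : ∀ ω, Eval .skip ω ω
    | seq : ∀ {t u : Term} {ω ω' ω'' : FState},
        Eval t ω ω' → Eval u ω' ω'' → Eval (.seq t u) ω ω''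
    | push : ∀ (n : ℕ) (x : Reg) (φ : Store) (c : ℕ),
        Eval (.push n x) (φ, c) (upd φ x (pushOp n (φ x, c)).1, (pushOp n (φ x, c)).2)
    | pop : ∀ (n : ℕ) (x : Reg) (φ : Store) (c : ℕ),
        Eval (.pop n x) (φ, c) (upd φ x (popOp n (φ x, c)).1, (popOp n (φ x, c)).2)
    | ifeq_true : ∀ {x n t} {φ : Store} {c : ℕ} {ω' : FState},
        (φ x).head? = some n → Eval t (φ, c) ω' → Eval (.ifeq x n t) (φ, c) ω'
    | ifeq_false : ∀ {x n t} (φ : Store) (c : ℕ),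
        (φ x).head? ≠ some n → Eval (.ifeq x n t) (φ, c) (φ, c)
    | normal : ∀ {xs t ω ω'}, Eval t ω ω' → Eval (.normal xs t) ω ω'
    | fort : ∀ {x ps ω ω'}, EvalList (ω.1 x) ps ω ω' → Eval (.fort x ps) ω ω'
    | roft : ∀ {x ps ω ω'}, EvalList (ω.1 x).reverse ps ω ω' → Eval (.roft x ps) ω ω'
  /-- Iteration judgment `⟦s, ps, ω⟧ ⇓ ω'`. -/
  inductive EvalList : Stack → Bodies → FState → FState → Prop where
    | nil : ∀ (ps : Bodies) (ω : FState), EvalList [] ps ω ω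
    | cons : ∀ {i : ℕ} {t : Stack} {ps : Bodies} {ω ω'' ω' : FState},
        Eval (ps.get i) ω ω'' → EvalList t ps ω'' ω' → EvalList (i :: t) ps ω ω'
end

mutual
  /-- The inversion map `−(·)` on terms. -/
  def Term.inv : Term → Term
    | .skip => .skip
    | .push n x => .pop n x
    | .pop n x => .push n x
    | .seq t u => .seq u.inv t.inv
    | .ifeq x n t => .ifeq x n t.inv
    | .normal xs t => .normal xs t.inv
    | .fort x ps => .roft x ps.inv
    | .roft x ps => .fort x ps.inv
  def Bodies.inv : Bodies → Bodies
    | .single t => .single t.inv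
    | .cons t ps => .cons t.inv ps.inv
end

mutual
  /-- `t.Writes y` holds iff some `PUSH`/`POP` occurring in `t` writes register `y`. -/
  def Term.Writes : Term → Reg → Prop
    | .skip, _ => False
    | .push _ x, y => x = y
    | .pop _ x, y => x = y
    | .seq t u, y => t.Writes y ∨ u.Writes y
    | .ifeq _ _ t, y => t.Writes y
    | .normal _ t, y => t.Writes y
    | .fort _ ps, y => ps.Writes y
    | .roft _ ps, y => ps.Writes y
  def Bodies.Writes : Bodies → Reg → Prop
    | .single t, y => t.Writes y
    | .cons t ps, y => t.Writes y ∨ ps.Writes y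
end

mutual
  /-- `t.Leads y` holds iff `y` leads some `FOR`/`ROF` iteration occurring in `t`. -/
  def Term.Leads : Term → Reg → Prop
    | .skip, _ => False
    | .push _ _, _ => False
    | .pop _ _, _ => False
    | .seq t u, y => t.Leads y ∨ u.Leads y
    | .ifeq _ _ t, y => t.Leads y
    | .normal _ t, y => t.Leads y
    | .fort x ps, y => x = y ∨ ps.Leads y
    | .roft x ps, y => x = y ∨ ps.Leads y
  def Bodies.Leads : Bodies → Reg → Prop
    | .single t, y => t.Leads y
    | .cons t ps, y => t.Leads y ∨ ps.Leads y
end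

mutual
  /-- `t.Mentions y` holds iff register `y` occurs in `t`. -/
  def Term.Mentions : Term → Reg → Prop
    | .skip, _ => False
    | .push _ x, y => x = y
    | .pop _ x, y => x = y
    | .seq t u, y => t.Mentions y ∨ u.Mentions y
    | .ifeq x _ t, y => x = y ∨ t.Mentions y
    | .normal xs t, y => y ∈ xs ∨ t.Mentions y
    | .fort x ps, y => x = y ∨ ps.Mentions y
    | .roft x ps, y => x = y ∨ ps.Mentions y
  def Bodies.Mentions : Bodies → Reg → Prop
    | .single t, y => t.Mentions y
    | .cons t ps, y => t.Mentions y ∨ ps.Mentions y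
end

mutual
  /-- The finite set of registers occurring in a term. -/
  def Term.regs : Term → Finset Reg
    | .skip => ∅
    | .push _ x => {x}
    | .pop _ x => {x}
    | .seq t u => t.regs ∪ u.regs
    | .ifeq x _ t => insert x t.regs
    | .normal xs t => xs.toFinset ∪ t.regs
    | .fort x ps => insert x ps.regs
    | .roft x ps => insert x ps.regs
  def Bodies.regs : Bodies → Finset Reg
    | .single t => t.regs
    | .cons t ps => t.regs ∪ ps.regs
end

mutual
  /-- Safe terms: generated by the grammar `S` (no `NORMAL`). -/
  def Term.Safe : Term → Prop
    | .skip => True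
    | .push _ _ => True
    | .pop _ _ => True
    | .seq t u => t.Safe ∧ u.Safe
    | .ifeq _ _ t => t.Safe
    | .normal _ _ => False
    | .fort _ ps => ps.Safe
    | .roft _ ps => ps.Safe
  def Bodies.Safe : Bodies → Prop
    | .single t => t.Safe
    | .cons t ps => t.Safe ∧ ps.Safe
end

/-- Raw terms: generated by the grammar `T` (iterations only inside `NORMAL` bodies,
which must be safe). -/
def Term.Raw : Term → Prop
  | .skip => True
  | .push _ _ => True
  | .pop _ _ => True
  | .seq t u => t.Raw ∧ u.Raw
  | .ifeq _ _ t => t.Raw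
  | .normal _ t => t.Safe
  | .fort _ _ => False
  | .roft _ _ => False

mutual
  /-- The read-only constraints (i) and (ii) defining membership in ForNo. -/
  def Term.WF : Term → Prop
    | .skip => True
    | .push _ _ => True
    | .pop _ _ => True
    | .seq t u => t.WF ∧ u.WF
    | .ifeq x _ t => t.WF ∧ ¬ t.Writes x
    | .normal xs t => t.WF ∧ (∀ x ∈ xs, ¬ t.Writes x) ∧ (∀ y, t.Leads y → y ∈ xs)
    | .fort x ps => ps.WF ∧ ¬ ps.Writes x
    | .roft x ps => ps.WF ∧ ¬ ps.Writes x
  def Bodies.WF : Bodies → Prop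
    | .single t => t.WF
    | .cons t ps => t.WF ∧ ps.WF
end

/-- A raw term is in ForNo if it satisfies the read-only constraints. -/
def InForNo (t : Term) : Prop := t.Raw ∧ t.WF

/-- `iterSeq t k` is the `k`-fold sequential composition `t;…;t` (`SKIP` for `k = 0`). -/
def iterSeq (t : Term) : ℕ → Term
  | 0 => .skip
  | 1 => t
  | n + 2 => .seq t (iterSeq t (n + 1))

/-- `mkBodiesAux g i k` is the list of bodies `g i, g (i+1), …, g (i+k)`. -/
def mkBodiesAux (g : ℕ → Term) : ℕ → ℕ → Bodies
  | i, 0 => .single (g i)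
  | i, k + 1 => .cons (g i) (mkBodiesAux g (i + 1) k)

/-- `mkBodies g k` is the list of bodies `g 0, g 1, …, g k`. -/
def mkBodies (g : ℕ → Term) (k : ℕ) : Bodies := mkBodiesAux g 0 k

/-- `COPY(x,y)` with bodies `PUSH[0] y, …, PUSH[k] y`. -/
def COPY (x y : Reg) (k : ℕ) : Term :=
  .normal [x] (.roft x (mkBodies (fun i => .push i y) k))

/-- `n` nested `FOR rgt` iterations around `PUSH[1] p`. -/
def powNest (rgt p : Reg) : ℕ → Term
  | 0 => .push 1 p
  | n + 1 => .fort rgt (.single (powNest rgt p n))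

/-- The term `POW^n`. -/
def POW (rgt p : Reg) (n : ℕ) : Term := .normal [rgt] (powNest rgt p n)

/-- The term `REMOVE-BLANKS` for tape alphabet codes `{0,…,n−1}` and
input alphabet codes `{0,…,m−1}`. -/
def REMOVEBLANKS (rgt g1 : Reg) (n m : ℕ) : Term :=
  .seq (.normal [rgt] (.roft rgt (mkBodies (fun i => .push i g1) (n - 1))))
       (.normal [g1]
         (.seq (.fort g1 (mkBodies (fun i => .pop i rgt) (n - 1)))
               (.roft g1 (mkBodies (fun i => if i < m then .push i rgt else .skip) m))))

mutual
  /-- Big-step semantics instrumented with the number of rule applications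
  in the derivation. -/
  inductive EvalN : ℕ → Term → FState → FState → Prop where
    | skip : ∀ ω, EvalN 1 .skip ω ω
    | seq : ∀ {k l : ℕ} {t u : Term} {ω ω' ω'' : FState},
        EvalN k t ω ω' → EvalN l u ω' ω'' → EvalN (k + l + 1) (.seq t u) ω ω''
    | push : ∀ (n : ℕ) (x : Reg) (φ : Store) (c : ℕ),
        EvalN 1 (.push n x) (φ, c) (upd φ x (pushOp n (φ x, c)).1, (pushOp n (φ x, c)).2)
    | pop : ∀ (n : ℕ) (x : Reg) (φ : Store) (c : ℕ),
        EvalN 1 (.pop n x) (φ, c) (upd φ x (popOp n (φ x, c)).1, (popOp n (φ x, c)).2)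
    | ifeq_true : ∀ {k x n t} {φ : Store} {c : ℕ} {ω' : FState},
        (φ x).head? = some n → EvalN k t (φ, c) ω' → EvalN (k + 1) (.ifeq x n t) (φ, c) ω'
    | ifeq_false : ∀ {x n t} (φ : Store) (c : ℕ),
        (φ x).head? ≠ some n → EvalN 1 (.ifeq x n t) (φ, c) (φ, c)
    | normal : ∀ {k xs t ω ω'}, EvalN k t ω ω' → EvalN (k + 1) (.normal xs t) ω ω'
    | fort : ∀ {k x ps ω ω'}, EvalListN k (ω.1 x) ps ω ω' → EvalN (k + 1) (.fort x ps) ω ω'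
    | roft : ∀ {k x ps ω ω'}, EvalListN k (ω.1 x).reverse ps ω ω' → EvalN (k + 1) (.roft x ps) ω ω'
  inductive EvalListN : ℕ → Stack → Bodies → FState → FState → Prop where
    | nil : ∀ (ps : Bodies) (ω : FState), EvalListN 1 [] ps ω ω
    | cons : ∀ {k l : ℕ} {i : ℕ} {t : Stack} {ps : Bodies} {ω ω'' ω' : FState},
        EvalN k (ps.get i) ω ω'' → EvalListN l t ps ω'' ω' →
        EvalListN (k + l + 1) (i :: t) ps ω ω'
end

/-! ### Turing machines -/

/-- Deterministic one-tape Turing machines with a semi-infinite tape, input/output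
alphabet `S` embedded in the tape alphabet `Γ`, and direction `Bool`
(`false` = left, `true` = right). -/
structure TM (S : Type) where
  Q : Type
  finQ : Fintype Q
  q0 : Q
  qhalt : Q
  Γ : Type
  finΓ : Fintype Γ
  decΓ : DecidableEq Γ
  blank : Γ
  embed : S → Γ
  embed_inj : Function.Injective embed
  blank_notin : ∀ a, embed a ≠ blank
  δ : Q → Γ → Q × Γ × Bool

namespace TM

variable {S : Type}

/-- Configurations `(u, q, v)`: left tape part (nearest cell first), current state,
right tape part starting with the scanned cell (no trailing blanks). -/
abbrev Config (M : TM S) : Type := List M.Γ × M.Q × List M.Γ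

/-- Remove the trailing blanks of a list. -/
def trim (M : TM S) (l : List M.Γ) : List M.Γ :=
  letI := M.decΓ
  (l.reverse.dropWhile (fun a => decide (a = M.blank))).reverse

/-- The single-step transition function. -/
def stepFn (M : TM S) (c : M.Config) : M.Config :=
  let u := c.1
  let q := c.2.1
  let v := c.2.2
  let a := v.headD M.blank
  let r := M.δ q a
  if r.2.2 then (r.2.1 :: u, r.1, v.tail)
  else (u.tail, r.1, M.trim (u.headD M.blank :: r.2.1 :: v.tail))

/-- Single-step transition relation `c ⇝ c'`. -/
def Step (M : TM S) (c c' : M.Config) : Prop := c.2.1 ≠ M.qhalt ∧ c' = M.stepFn c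

/-- `n`-step transition relation `c ⇝ⁿ c'`. -/
def Steps (M : TM S) : ℕ → M.Config → M.Config → Prop
  | 0 => fun c c' => c = c'
  | n + 1 => fun c c'' => ∃ c', M.Step c c' ∧ M.Steps n c' c''

/-- The initial configuration on input `w`. -/
def init (M : TM S) (w : List S) : M.Config := ([], M.q0, w.map M.embed)

/-- `M` is a polynomial-time Turing machine. -/
def PTime (M : TM S) : Prop :=
  ∃ a b : ℕ, 0 < a ∧ 0 < b ∧ ∀ w : List S,
    ∃ k ≤ a * w.length ^ b, ∃ c : M.Config, M.Steps k (M.init w) c ∧ c.2.1 = M.qhalt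

end TM

/-- `f` is computable in polynomial time. -/
def FPTime {S : Type} (f : List S → List S) : Prop :=
  ∃ M : TM S, M.PTime ∧
    ∀ w : List S, ∃ k : ℕ, M.Steps k (M.init w) ([], M.qhalt, (f w).map M.embed)

/-- `f` is honest: the input length is polynomially bounded in the output length. -/
def Honest {S : Type} (f : List S → List S) : Prop :=
  ∃ q : Polynomial ℕ, ∀ x : List S, x.length ≤ q.eval (f x).length

/-! ### Encodings and computed functions -/

/-- An encoding of a finite alphabet `S`: a bijection onto `{0, …, |S| − 1}`. -/
structure Encoding (S : Type) [Fintype S] where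
  enc : S → ℕ
  inj : Function.Injective enc
  lt : ∀ a, enc a < Fintype.card S

/-- Encoding of strings as stacks. -/
def Encoding.encStr {S : Type} [Fintype S] (e : Encoding S) (w : List S) : Stack :=
  w.map e.enc

/-- `T` (with input register `rin` and output register `rout`) computes `f`. -/
def Computes {S : Type} [Fintype S] (e : Encoding S) (T : Term) (rin rout : Reg)
    (f : List S → List S) : Prop :=
  ∀ x : List S, ∃ φ : Store,
    Eval T (upd emptyStore rin (e.encStr x), 0) (φ, 0) ∧ φ rout = e.encStr (f x)

/-- `T` computes `f` with zero-garbage. -/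
def ComputesZG {S : Type} [Fintype S] (e : Encoding S) (T : Term) (rin rout : Reg)
    (f : List S → List S) : Prop :=
  ∀ x : List S, ∃ φ : Store,
    Eval T (upd emptyStore rin (e.encStr x), 0) (φ, 0) ∧ φ rout = e.encStr (f x) ∧
    ∀ y : Reg, y ≠ rout → φ y = []

/-! ### Simulation of Turing machines -/

/-- The register holding the left part of the tape. -/
def lftR : Reg := 0
/-- The register holding the current state. -/
def qR : Reg := 1
/-- The register holding the right part of the tape. -/
def rgtR : Reg := 2

/-- `σ` simulates configuration `c` (written `σ ≈ c`). -/
def Sim {S : Type} (M : TM S) (encΓ : M.Γ → ℕ) (encQ : M.Q → ℕ)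
    (σ : FState) (c : M.Config) : Prop :=
  σ.2 = 0 ∧
  σ.1 lftR = c.1.map encΓ ∧
  (σ.1 qR).head? = some (encQ c.2.1) ∧
  ∃ bs : Stack, (∀ b ∈ bs, b = encΓ M.blank) ∧ σ.1 rgtR = c.2.2.map encΓ ++ bs

/-- `σ` cleanly simulates configuration `c` (written `σ ≅ c`). -/
def SimClean {S : Type} (M : TM S) (encΓ : M.Γ → ℕ) (encQ : M.Q → ℕ)
    (σ : FState) (c : M.Config) : Prop :=
  σ.2 = 0 ∧
  σ.1 lftR = c.1.map encΓ ∧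
  (σ.1 qR).head? = some (encQ c.2.1) ∧
  σ.1 rgtR = c.2.2.map encΓ

/-- The hypotheses of the simulation setup: `encΓ` is a bijection of `Γ` onto
`{0,…,n−1}` giving non-input characters larger codes than input characters,
and `encQ` is an injective encoding of states. -/
def SimSetup {S : Type} (M : TM S) (encΓ : M.Γ → ℕ) (encQ : M.Q → ℕ) : Prop :=
  Function.Injective encΓ ∧
  (∀ a : M.Γ, encΓ a < @Fintype.card M.Γ M.finΓ) ∧
  (∀ a : M.Γ, (∀ s : S, M.embed s ≠ a) → ∀ s : S, encΓ (M.embed s) < encΓ a) ∧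
  Function.Injective encQ

/-! The first `NORMAL` copies the stack `s` of `rgt` onto `g1` in the same order (`ROF` pushes
the bottom first). Walking `g1` from the top then pops `rgt` empty, each `POP` meeting exactly the
code it expects, so the counter stays `0`; finally `ROF g1` pushes back the codes `< m` only.
Input codes are `< m` and the blank code is `≥ m`, so this rebuilds `v` without the blanks. -/

@[simp]
lemma upd_self (φ : Store) (x : Reg) (s : Stack) : upd φ x s x = s := by simp [upd]

lemma upd_of_ne (φ : Store) {x y : Reg} (s : Stack) (h : y ≠ x) : upd φ x s y = φ y := by
  simp [upd, h]

@[simp]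
lemma upd_idem (φ : Store) (x : Reg) (s s' : Stack) : upd (upd φ x s) x s' = upd φ x s' := by
  funext y; by_cases h : y = x <;> simp [upd, h]

@[simp]
lemma upd_eq_self (φ : Store) (x : Reg) : upd φ x (φ x) = φ := by
  funext y; by_cases h : y = x <;> simp [upd, h]

lemma mkBodiesAux_get (g : ℕ → Term) (k i j : ℕ) :
    (mkBodiesAux g i k).get j = g (i + min j k) := by
  induction k generalizing i j with
  | zero => simp [mkBodiesAux, Bodies.get]
  | succ k ih =>
    cases j with
    | zero => simp [mkBodiesAux, Bodies.get]
    | succ j =>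
      rw [mkBodiesAux, Bodies.get, ih]
      congr 1
      omega

lemma mkBodies_get (g : ℕ → Term) (k j : ℕ) : (mkBodies g k).get j = g (min j k) := by
  simpa [mkBodies] using mkBodiesAux_get g k 0 j

lemma Eval.push_sound (i : ℕ) (x : Reg) (φ : Store) :
    Eval (.push i x) (φ, 0) (upd φ x (i :: φ x), 0) := by
  simpa [pushOp] using Eval.push i x φ 0

lemma Eval.pop_sound {i : ℕ} {x : Reg} {φ : Store} {rest : Stack} (h : φ x = i :: rest) :
    Eval (.pop i x) (φ, 0) (upd φ x rest, 0) := by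
  simpa [popOp, h] using Eval.pop i x φ 0

lemma EvalList.push_filter {ps : Bodies} {x : Reg} (p : ℕ → Bool) {l : Stack}
    (hps : ∀ i ∈ l, ps.get i = if p i then .push i x else .skip) (φ : Store) :
    EvalList l ps (φ, 0) (upd φ x ((l.filter p).reverse ++ φ x), 0) := by
  induction l generalizing φ with
  | nil => simpa using EvalList.nil ps (φ, 0)
  | cons i l ih =>
    have hl := ih (fun j hj => hps j (List.mem_cons_of_mem i hj))
    have hi := hps i List.mem_cons_self
    by_cases hpi : p i
    · rw [hpi, if_pos rfl] at hi
      rw [List.filter_cons_of_pos hpi, List.reverse_cons, List.append_assoc,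
        List.singleton_append]
      have := EvalList.cons (hi ▸ Eval.push_sound i x φ) (hl _)
      rwa [upd_idem, upd_self] at this
    · rw [if_neg hpi] at hi
      simpa [List.filter_cons, hpi] using EvalList.cons (hi ▸ Eval.skip (φ, 0)) (hl φ)

lemma EvalList.pops {ps : Bodies} {x : Reg} {l : Stack}
    (hps : ∀ i ∈ l, ps.get i = .pop i x) {φ : Store} {rest : Stack} (hx : φ x = l ++ rest) :
    EvalList l ps (φ, 0) (upd φ x rest, 0) := by
  induction l generalizing φ with
  | nil =>
    rw [List.nil_append] at hx
    simpa [← hx] using EvalList.nil ps (φ, 0)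
  | cons i l ih =>
    have hl := ih (fun j hj => hps j (List.mem_cons_of_mem i hj)) (upd_self φ x (l ++ rest))
    rw [upd_idem] at hl
    exact EvalList.cons ((hps i List.mem_cons_self) ▸ Eval.pop_sound hx) hl

lemma Eval.COPY {x y : Reg} {k : ℕ} {φ : Store} (hx : ∀ i ∈ φ x, i ≤ k) :
    Eval (COPY x y k) (φ, 0) (upd φ y (φ x ++ φ y), 0) := by
  refine .normal (.roft ?_)
  have := EvalList.push_filter (ps := mkBodies (fun i => .push i y) k) (x := y) (fun _ => true)
    (l := (φ x).reverse) (fun i hi => by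
      rw [mkBodies_get, min_eq_left (hx i (List.mem_reverse.mp hi)), if_pos rfl]) φ
  simpa using this

lemma Eval.fort_pops {x y : Reg} {k : ℕ} {φ : Store} {rest : Stack} (hy : ∀ i ∈ φ y, i ≤ k)
    (hx : φ x = φ y ++ rest) :
    Eval (.fort y (mkBodies (fun i => .pop i x) k)) (φ, 0) (upd φ x rest, 0) :=
  .fort (EvalList.pops (fun i hi => by rw [mkBodies_get, min_eq_left (hy i hi)]) hx)

lemma Eval.roft_push_lt (x y : Reg) (m : ℕ) (φ : Store) :
    Eval (.roft y (mkBodies (fun i => if i < m then .push i x else .skip) m)) (φ, 0)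
      (upd φ x ((φ y).filter (· < m) ++ φ x), 0) := by
  refine .roft ?_
  have := EvalList.push_filter (ps := mkBodies (fun i => if i < m then .push i x else .skip) m)
    (x := x) (fun i => decide (i < m)) (l := (φ y).reverse) (fun i _ => by
      rw [mkBodies_get]
      by_cases him : i < m
      · simp [him, min_eq_left him.le]
      · simp [him, min_eq_right (not_lt.mp him)]) φ
  simpa [List.filter_reverse] using this

end ForNo
open ForNo in
/-- Correctness of REMOVE-BLANKS: with `Γ` encoded by
`{0,…,n−1}`, `Σ` by `{0,…,m−1}` (`m < n`) and blank code `bc` with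
`m ≤ bc < n`, REMOVE-BLANKS removes the trailing blanks of `rgt`. -/
theorem remove_blanks_correct (rgt g1 : Reg) (hne : rgt ≠ g1)
    (n m : ℕ) (hmn : m < n) (bc : ℕ) (hbc1 : m ≤ bc) (hbc2 : bc < n)
    (v : Stack) (hv : ∀ i ∈ v, i < m) (k : ℕ) (φ : Store)
    (hrgt : φ rgt = v ++ List.replicate k bc) (hg1 : φ g1 = []) :
    ∃ φ' : Store, Eval (REMOVEBLANKS rgt g1 n m) (φ, 0) (φ', 0) ∧
      φ' rgt = v ∧ ∀ x : Reg, x ≠ rgt → x ≠ g1 → φ' x = φ x := by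
  have hcodes : ∀ i ∈ φ rgt, i ≤ n - 1 := by
    intro i hi
    rw [hrgt, List.mem_append, List.mem_replicate] at hi
    rcases hi with hi | ⟨-, rfl⟩
    · have := hv i hi
      omega
    · omega
  have hfilter : (φ rgt).filter (· < m) = v := by
    rw [hrgt, List.filter_append, List.filter_eq_self.mpr (by simpa using hv),
      List.filter_eq_nil_iff.mpr (by simp [List.mem_replicate, hbc1]), List.append_nil]
  set φ₁ := upd φ g1 (φ rgt)
  set φ₂ := upd φ₁ rgt []
  have copy : Eval (COPY rgt g1 (n - 1)) (φ, 0) (φ₁, 0) := by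
    simpa [hg1] using Eval.COPY (y := g1) hcodes
  have clear : Eval (.fort g1 (mkBodies (fun i => .pop i rgt) (n - 1))) (φ₁, 0) (φ₂, 0) :=
    Eval.fort_pops (by simpa [φ₁] using hcodes) (by simp [φ₁, upd_of_ne _ _ hne])
  have restore := Eval.roft_push_lt rgt g1 m φ₂
  refine ⟨_, .seq copy (.normal (.seq clear restore)), ?_, fun x hx hx' => ?_⟩
  · simp [φ₂, φ₁, upd_of_ne _ _ hne.symm, hfilter]
  · simp [φ₂, φ₁, upd_of_ne _ _ hx, upd_of_ne _ _ hx']
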